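/- If there exist a matrix Γ ∈ ℝ^{n2×n1} and vector γ ∈ ℝ^{n2} with G1 = G2 Γ, c2 − c1 = G2 γ, and the ∞-norm of the augmented matrix [Γ γ] (maximum absolute row sum) at most 1, then the zonotope ⟨c1, G1⟩ is contained in the zonotope ⟨c2, G2⟩. -/
import Mathlib


/-- The zonotope with centre `c` and generator matrix `G`. -/
def zonotope {d n : ℕ} (c : Fin d → ℝ) (G : Matrix (Fin d) (Fin n) ℝ) :
    Set (Fin d → ℝ) :=
  {x | ∃ β : Fin n → ℝ, ‖β‖ ≤ 1 ∧ x = c + G.mulVec β}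

/-- Sufficient condition for zonotope containment: if `G₁ = G₂ Γ`,
`c₂ - c₁ = G₂ γ`, and every row of the augmented matrix `[Γ γ]` has absolute
row sum at most `1`, then `⟨c₁, G₁⟩ ⊆ ⟨c₂, G₂⟩`. -/
theorem zonotope_containment {d n₁ n₂ : ℕ}
    (c₁ c₂ : Fin d → ℝ) (G₁ : Matrix (Fin d) (Fin n₁) ℝ)
    (G₂ : Matrix (Fin d) (Fin n₂) ℝ)
    (Γ : Matrix (Fin n₂) (Fin n₁) ℝ) (γ : Fin n₂ → ℝ)
    (hG : G₁ = G₂ * Γ)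
    (hc : c₂ - c₁ = G₂.mulVec γ)
    (hnorm : ∀ i : Fin n₂, (∑ j, |Γ i j|) + |γ i| ≤ 1) :
    zonotope c₁ G₁ ⊆ zonotope c₂ G₂ := by
  rintro x ⟨β, hβ, rfl⟩
  refine ⟨Γ.mulVec β - γ, ?_, ?_⟩
  · rw [pi_norm_le_iff_of_nonneg (by norm_num)]
    intro i
    have hβj : ∀ j, |β j| ≤ 1 := fun j => by
      calc |β j| = ‖β j‖ := rfl
        _ ≤ ‖β‖ := norm_le_pi_norm β j
        _ ≤ 1 := hβ
    have h1 : |Γ.mulVec β i| ≤ ∑ j, |Γ i j| := by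
      calc |Γ.mulVec β i| = |∑ j, Γ i j * β j| := rfl
        _ ≤ ∑ j, |Γ i j * β j| := Finset.abs_sum_le_sum_abs _ _
        _ ≤ ∑ j, |Γ i j| := by
            refine Finset.sum_le_sum fun j _ => ?_
            rw [abs_mul]
            exact mul_le_of_le_one_right (abs_nonneg _) (hβj j)
    calc ‖(Γ.mulVec β - γ) i‖ = |Γ.mulVec β i - γ i| := rfl
      _ ≤ |Γ.mulVec β i| + |γ i| := abs_sub _ _
      _ ≤ (∑ j, |Γ i j|) + |γ i| := by linarith
      _ ≤ 1 := hnorm i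
  · rw [hG, Matrix.mulVec_sub, ← hc, ← Matrix.mulVec_mulVec]
    ring_nf
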